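/- arXiv:2010.15083 — 6 statements merged into one kernel-verified Lean document; each statement's English description precedes it below -/
import Mathlib

section
/- Let n, k be positive natural numbers and define f(x) = x·log k + x − (x + 1/2)·log x − (x − 1)·log n for x > 0. Then f has a unique zero in the interval (0, ∞). -/
/-!
On `(0, 1]` every term of `f` is nonnegative and `x > 0`, so `f > 0` there, while `f` is
negative as soon as `log x ≥ log k + 1`; the intermediate value theorem gives a zero. Since
`f''(x) = (1 - 2x) / (2x²)`, `f` is strictly concave on `[1/2, ∞)`, and a strictly concave
function that is positive at the left end of a half-line vanishes at most once on it.
-/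

noncomputable def f (n k : ℕ) (x : ℝ) : ℝ :=
  x * Real.log k + x - (x + 1/2) * Real.log x - (x - 1) * Real.log n

open Real Set

theorem StrictConcaveOn.eq_of_apply_eq_zero {g : ℝ → ℝ} {a p q : ℝ}
    (hg : StrictConcaveOn ℝ (Ici a) g) (ha : 0 < g a) (hp : p ∈ Ici a) (hq : q ∈ Ici a)
    (hgp : g p = 0) (hgq : g q = 0) : p = q := by
  wlog hpq : p < q generalizing p q
  · rcases (not_lt.mp hpq).eq_or_lt with h | h
    · exact h.symm
    · exact (this hq hp hgq hgp h).symm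
  have hap : a < p := hp.lt_of_ne (by rintro rfl; exact ha.ne' hgp)
  have hmin := hg.lt_on_openSegment self_mem_Ici hq (hap.trans hpq).ne
    (by rw [openSegment_eq_Ioo (hap.trans hpq)]; exact ⟨hap, hpq⟩)
  rw [hgp, hgq, min_eq_right ha.le] at hmin
  exact absurd hmin (lt_irrefl 0)

section

variable (n k : ℕ)

noncomputable def f' (x : ℝ) : ℝ :=
  log k - log n - log x - 1 / (2 * x)

theorem hasDerivAt_f {x : ℝ} (hx : 0 < x) : HasDerivAt (f n k) (f' n k x) x := by
  have h := ((((hasDerivAt_id' x).mul_const (log k)).add (hasDerivAt_id' x)).sub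
    (((hasDerivAt_id' x).add_const (1/2 : ℝ)).mul (hasDerivAt_log hx.ne'))).sub
    (((hasDerivAt_id' x).sub_const 1).mul_const (log n))
  refine h.congr_deriv ?_
  simp only [f']
  field_simp
  ring

theorem hasDerivAt_f' {x : ℝ} (hx : 0 < x) :
    HasDerivAt (f' n k) ((1 - 2 * x) / (2 * x ^ 2)) x := by
  have h := ((hasDerivAt_const x (log k - log n)).sub (hasDerivAt_log hx.ne')).sub
    ((hasDerivAt_const x (1 : ℝ)).div ((hasDerivAt_id' x).const_mul 2) (by positivity))
  refine h.congr_deriv ?_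
  field_simp
  ring

theorem continuousOn_f : ContinuousOn (f n k) (Ioi 0) :=
  fun _ hx ↦ (hasDerivAt_f n k hx).continuousAt.continuousWithinAt

theorem strictAntiOn_f' : StrictAntiOn (f' n k) (Ioi (1/2)) := by
  refine strictAntiOn_of_deriv_neg (convex_Ioi _)
    (fun x hx ↦ (hasDerivAt_f' n k (by linarith [mem_Ioi.mp hx])).continuousAt.continuousWithinAt)
    fun x hx ↦ ?_
  rw [interior_Ioi] at hx
  have hx : 1/2 < x := hx
  rw [(hasDerivAt_f' n k (by linarith)).deriv]
  exact div_neg_of_neg_of_pos (by linarith) (by positivity)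

theorem strictConcaveOn_f : StrictConcaveOn ℝ (Ici (1/2)) (f n k) := by
  refine StrictAntiOn.strictConcaveOn_of_deriv (convex_Ici _)
    ((continuousOn_f n k).mono fun x hx ↦ lt_of_lt_of_le (by norm_num) (mem_Ici.mp hx)) ?_
  rw [interior_Ici]
  intro a ha b hb hab
  have ha : 1/2 < a := ha
  have hb : 1/2 < b := hb
  rw [(hasDerivAt_f n k (by linarith)).deriv, (hasDerivAt_f n k (by linarith)).deriv]
  exact strictAntiOn_f' n k ha hb hab

theorem f_pos_of_le_one {x : ℝ} (hx : 0 < x) (hx1 : x ≤ 1) : 0 < f n k x := by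
  have hlogx : log x ≤ 0 := log_nonpos hx.le hx1
  unfold f
  nlinarith [mul_nonneg hx.le (log_natCast_nonneg k),
    mul_nonneg (sub_nonneg.mpr hx1) (log_natCast_nonneg n)]

theorem f_neg_of_log_ge {x : ℝ} (hx : 1 < x) (hlogx : log k + 1 ≤ log x) : f n k x < 0 := by
  have hlogx_pos : 0 < log x := log_pos hx
  unfold f
  nlinarith [mul_nonneg (sub_nonneg.mpr hx.le) (log_natCast_nonneg n)]

end

theorem unique_positive_zero_general (n k : ℕ) :
    ∃! x : ℝ, 0 < x ∧ f n k x = 0 := by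
  have one_lt_of_zero {x : ℝ} (hx : 0 < x) (h : f n k x = 0) : 1 < x :=
    lt_of_not_ge fun hx1 ↦ (f_pos_of_le_one n k hx hx1).ne' h
  have hM : 1 < exp (log k + 1) := one_lt_exp_iff.mpr (by linarith [log_natCast_nonneg k])
  obtain ⟨x₀, hx₀, hfx₀⟩ := intermediate_value_Icc' hM.le
    ((continuousOn_f n k).mono fun x hx ↦ zero_lt_one.trans_le hx.1)
    ⟨(f_neg_of_log_ge n k hM (log_exp _).ge).le, (f_pos_of_le_one n k one_pos le_rfl).le⟩
  have hx₀_pos : 0 < x₀ := zero_lt_one.trans_le hx₀.1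
  refine ⟨x₀, ⟨hx₀_pos, hfx₀⟩, fun y ⟨hy, hfy⟩ ↦ ?_⟩
  have mem_Ici_half {x : ℝ} (hx : 1 < x) : x ∈ Ici (1/2) := mem_Ici.mpr (by linarith)
  exact (strictConcaveOn_f n k).eq_of_apply_eq_zero
    (f_pos_of_le_one n k (by norm_num) (by norm_num))
    (mem_Ici_half (one_lt_of_zero hy hfy)) (mem_Ici_half (one_lt_of_zero hx₀_pos hfx₀)) hfy hfx₀

/-- `f` has a unique zero in `(0, ∞)`. -/
theorem unique_positive_zero (n k : ℕ) (hn : 1 ≤ n) (hk : 1 ≤ k) :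
    ∃! x : ℝ, 0 < x ∧ f n k x = 0 :=
  unique_positive_zero_general n k
end

section
/- Let ν(n,k) be the unique positive zero of f_{n,k}(x) = x·log k + x − (x + 1/2)·log x − (x − 1)·log n, and write ν(n) := ν(n,n). Then n ↦ ν(n) is strictly increasing. -/
/-!
On the diagonal the `x * log n` terms cancel and `f n n x = log n - g x` with
`g x = stirlingLog x = (x + 1/2) log x - x`, so `ν(n)` is the solution of `g (ν n) = log n`. Since
`g' x = log x + 1/(2x) > 0` on `(0, ∞)`, `g` is strictly increasing there, and so is `ν`
together with `log`.
-/

open Real Set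

noncomputable def stirlingLog (x : ℝ) : ℝ := (x + 1/2) * log x - x

lemma f_diag_eq (n : ℕ) (x : ℝ) : f n n x = log n - stirlingLog x := by
  unfold f stirlingLog
  ring

-- `t < 1 + t/2 + (t/2)²/2 ≤ exp (t/2)`, the first step being `(t - 2)² + 4 > 0`.
lemma Real.log_lt_half_self {t : ℝ} (ht : 0 < t) : log t < t / 2 := by
  have hexp : t < exp (t / 2) :=
    lt_of_lt_of_le (by nlinarith [sq_nonneg (t - 2)]) (quadratic_le_exp_of_nonneg (by positivity))
  exact (log_lt_iff_lt_exp ht).2 hexp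

lemma hasDerivAt_stirlingLog {x : ℝ} (hx : x ≠ 0) :
    HasDerivAt stirlingLog (log x + 1 / (2 * x)) x := by
  have h : HasDerivAt (fun y => (y + 1/2) * log y - y) (1 * log x + (x + 1/2) * x⁻¹ - 1) x :=
    (((hasDerivAt_id' x).add_const (1/2)).mul (hasDerivAt_log hx)).sub (hasDerivAt_id' x)
  refine h.congr_deriv ?_
  field_simp
  ring

lemma log_add_inv_two_mul_pos {x : ℝ} (hx : 0 < x) : 0 < log x + 1 / (2 * x) := by
  have h := log_lt_half_self (inv_pos.2 hx)
  rw [log_inv] at h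
  field_simp at h ⊢
  linarith

lemma strictMonoOn_stirlingLog : StrictMonoOn stirlingLog (Ioi 0) := by
  refine strictMonoOn_of_hasDerivWithinAt_pos (f' := fun x => log x + 1 / (2 * x))
    (convex_Ioi 0) ?_ ?_ ?_
  · exact fun x hx => (hasDerivAt_stirlingLog hx.ne').continuousAt.continuousWithinAt
  · rw [interior_Ioi]
    exact fun x hx => (hasDerivAt_stirlingLog hx.ne').hasDerivWithinAt
  · rw [interior_Ioi]
    exact fun x hx => log_add_inv_two_mul_pos hx

/-- `ν(n) := ν(n,n)`, the unique positive zero of `f_{n,n}`, is strictly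
increasing in `n`. -/
theorem nu_diag_strictMono (n₁ n₂ : ℕ) (hn₁ : 1 ≤ n₁) (hlt : n₁ < n₂)
    (ν₁ ν₂ : ℝ)
    (hν₁ : 0 < ν₁ ∧ f n₁ n₁ ν₁ = 0) (hν₂ : 0 < ν₂ ∧ f n₂ n₂ ν₂ = 0) :
    ν₁ < ν₂ := by
  obtain ⟨hν₁_pos, hν₁_zero⟩ := hν₁
  obtain ⟨hν₂_pos, hν₂_zero⟩ := hν₂
  rw [f_diag_eq, sub_eq_zero] at hν₁_zero hν₂_zero
  refine (strictMonoOn_stirlingLog.lt_iff_lt hν₁_pos hν₂_pos).1 ?_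
  rw [← hν₁_zero, ← hν₂_zero]
  exact log_lt_log (by exact_mod_cast hn₁) (by exact_mod_cast hlt)
end

section
/- If k(n) = Θ(n) (i.e. there exist constants 0 < c₁ ≤ c₂ with c₁ n ≤ k(n) ≤ c₂ n for all large n), then ν(n, k(n)) = (1 + o(1))·log n / log log n as n → ∞, where ν(n,k) is the unique positive zero of f_{n,k}(x) = x·log k + x − (x + 1/2)·log x − (x − 1)·log n. -/
open Filter Real Asymptotics

lemma add_half_mul_log_le {x M : ℝ} (hx : 0 < x) (hxM : x ≤ M) (hM : 1 ≤ M) :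
    (x + 1/2) * log x ≤ (M + 1/2) * log M := by
  rcases le_or_gt x 1 with hx1 | hx1
  · have : 0 ≤ (M + 1/2) * log M := mul_nonneg (by linarith) (log_nonneg hM)
    nlinarith [log_nonpos hx.le hx1]
  · have := log_nonneg hx1.le
    gcongr

lemma f_eq_zero_iff {n k : ℕ} {x : ℝ} (hn : n ≠ 0) (hk : k ≠ 0) :
    f n k x = 0 ↔ (x + 1/2) * log x = (log (k / n) + 1) * x + log n := by
  rw [f, log_div (Nat.cast_ne_zero.2 hk) (Nat.cast_ne_zero.2 hn)]
  constructor <;> intro h <;> linear_combination -h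

section

variable {α : Type*} {l : Filter α} {x a L : α → ℝ}

lemma log_isBigO_one_of_eventually_mem_Icc {r : α → ℝ} {c₁ c₂ : ℝ} (hc₁ : 0 < c₁)
    (hr : ∀ᶠ i in l, r i ∈ Set.Icc c₁ c₂) :
    (fun i => log (r i)) =O[l] fun _ => (1 : ℝ) := by
  refine IsBigO.of_bound (max |log c₁| |log c₂|) ?_
  filter_upwards [hr] with i ⟨h₁, h₂⟩
  rw [norm_one, mul_one, norm_eq_abs]
  exact abs_le_max_abs_abs (log_le_log hc₁ h₁) (log_le_log (hc₁.trans_le h₁) h₂)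

lemma tendsto_atTop_of_add_half_mul_log_eq (hL : Tendsto L l atTop)
    (ha : a =O[l] fun _ => (1 : ℝ)) (hx : ∀ᶠ i in l, 0 < x i)
    (heq : ∀ᶠ i in l, (x i + 1/2) * log (x i) = a i * x i + L i) :
    Tendsto x l atTop := by
  obtain ⟨A, hA⟩ := ha.bound
  rw [tendsto_atTop]
  intro b
  set M := max b 1
  filter_upwards [hA, hx, heq, hL.eventually_gt_atTop ((M + 1/2) * log M + |A| * M)]
    with i hAi hxi heqi hLi
  by_contra! hxb
  have hxM : x i ≤ M := hxb.le.trans (le_max_left b 1)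
  have hlog := add_half_mul_log_le hxi hxM (le_max_right b 1)
  have hax : |a i * x i| ≤ |A| * M := by
    rw [norm_one, mul_one, norm_eq_abs] at hAi
    rw [abs_mul, abs_of_pos hxi]
    exact mul_le_mul (hAi.trans (le_abs_self A)) hxM hxi.le (abs_nonneg A)
  linarith [neg_abs_le (a i * x i)]

lemma mul_log_isEquivalent_of_add_half_mul_log_eq (hx : Tendsto x l atTop)
    (ha : a =O[l] fun _ => (1 : ℝ))
    (heq : ∀ᶠ i in l, (x i + 1/2) * log (x i) = a i * x i + L i) :
    (fun i => x i * log (x i)) ~[l] L := by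
  have hlog : Tendsto (fun i => log (x i)) l atTop := tendsto_log_atTop.comp hx
  have hlog_small : (fun i => log (x i)) =o[l] fun i => x i * log (x i) := by
    have h := ((isLittleO_one_left_iff ℝ).2 (tendsto_norm_atTop_atTop.comp hx)).mul_isBigO
      (isBigO_refl (fun i => log (x i)) l)
    simpa only [one_mul] using h
  have hax_small : (fun i => a i * x i) =o[l] fun i => x i * log (x i) := by
    have h := (ha.trans_isLittleO ((isLittleO_one_left_iff ℝ).2
      (tendsto_norm_atTop_atTop.comp hlog))).mul_isBigO (isBigO_refl x l)
    simpa only [mul_comm (log _)] using h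
  refine IsEquivalent.symm (IsLittleO.isEquivalent ?_)
  refine ((hlog_small.const_mul_left (1/2)).sub hax_small).congr' ?_ EventuallyEq.rfl
  filter_upwards [heq] with i hi
  simp only [Pi.sub_apply]
  linarith

lemma mul_log_isEquivalent_of_mul_log_self_isEquivalent (hx : Tendsto x l atTop)
    (h : (fun i => x i * log (x i)) ~[l] L) :
    (fun i => x i * log (L i)) ~[l] L := by
  have hlog : Tendsto (fun i => log (x i)) l atTop := tendsto_log_atTop.comp hx
  have hL : Tendsto L l atTop := h.tendsto_atTop (hx.atTop_mul_atTop₀ hlog)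
  have hlog_mul : (fun i => log (x i * log (x i))) ~[l] fun i => log (x i) := by
    refine (IsEquivalent.refl.add_isLittleO
      (isLittleO_log_id_atTop.comp_tendsto hlog)).congr_left ?_
    filter_upwards [hx.eventually_gt_atTop 0, hlog.eventually_gt_atTop 0] with i hxi hlogi
    exact (log_mul hxi.ne' hlogi.ne').symm
  have hlogL : (fun i => log (L i)) ~[l] fun i => log (x i) := (h.log hL).symm.trans hlog_mul
  exact (IsEquivalent.refl.mul hlogL).trans h

end

theorem nu_asymp_of_k_linear_general (k : ℕ → ℕ) (c₁ c₂ : ℝ) (hc₁ : 0 < c₁)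
    (hbound : ∀ᶠ n : ℕ in Filter.atTop,
      c₁ * (n : ℝ) ≤ (k n : ℝ) ∧ (k n : ℝ) ≤ c₂ * (n : ℝ))
    (ν : ℕ → ℝ) (hν : ∀ n, 1 ≤ n → 0 < ν n ∧ f n (k n) (ν n) = 0) :
    Filter.Tendsto
      (fun n : ℕ => ν n * Real.log (Real.log n) / Real.log n)
      Filter.atTop (nhds 1) := by
  have hL : Tendsto (fun n : ℕ => log n) atTop atTop :=
    tendsto_log_atTop.comp tendsto_natCast_atTop_atTop
  have hratio : ∀ᶠ n : ℕ in atTop, (k n / n : ℝ) ∈ Set.Icc c₁ c₂ := by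
    filter_upwards [hbound, eventually_gt_atTop 0] with n ⟨h₁, h₂⟩ hn
    have hn' : (0 : ℝ) < n := Nat.cast_pos.2 hn
    exact ⟨(le_div_iff₀ hn').2 h₁, (div_le_iff₀ hn').2 h₂⟩
  have ha := (log_isBigO_one_of_eventually_mem_Icc hc₁ hratio).add
    (isBigO_refl (fun _ => (1 : ℝ)) atTop)
  have hpos : ∀ᶠ n in atTop, 0 < ν n := eventually_ge_atTop 1 |>.mono fun n hn => (hν n hn).1
  have heq : ∀ᶠ n : ℕ in atTop,
      (ν n + 1/2) * log (ν n) = (log (k n / n) + 1) * ν n + log n := by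
    filter_upwards [hbound, eventually_ge_atTop 1] with n ⟨h₁, _⟩ hn
    have hk : (0 : ℝ) < k n := (mul_pos hc₁ (Nat.cast_pos.2 hn)).trans_le h₁
    exact (f_eq_zero_iff (by omega) (Nat.cast_pos.1 hk).ne').1 (hν n hn).2
  have hν_top := tendsto_atTop_of_add_half_mul_log_eq hL ha hpos heq
  have h := mul_log_isEquivalent_of_mul_log_self_isEquivalent hν_top
    (mul_log_isEquivalent_of_add_half_mul_log_eq hν_top ha heq)
  exact (isEquivalent_iff_tendsto_one (hL.eventually_ne_atTop 0)).1 h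

/-- If `k(n) = Θ(n)`, then `ν(n, k(n)) = (1 + o(1))·log n / log log n`, where
`ν(n,k)` is the unique positive zero of `f_{n,k}`. -/
theorem nu_asymp_of_k_linear (k : ℕ → ℕ) (c₁ c₂ : ℝ) (hc₁ : 0 < c₁)
    (hc : c₁ ≤ c₂)
    (hbound : ∀ᶠ n : ℕ in Filter.atTop,
      c₁ * (n : ℝ) ≤ (k n : ℝ) ∧ (k n : ℝ) ≤ c₂ * (n : ℝ))
    (ν : ℕ → ℝ) (hν : ∀ n, 1 ≤ n → 0 < ν n ∧ f n (k n) (ν n) = 0) :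
    Filter.Tendsto
      (fun n : ℕ => ν n * Real.log (Real.log n) / Real.log n)
      Filter.atTop (nhds 1) :=
  nu_asymp_of_k_linear_general k c₁ c₂ hc₁ hbound ν hν
end

section
/- If k(n) = o(n·log n), then ν(n, k(n)) = o(log n), i.e. ν(n,k(n))/log n → 0 as n → ∞, where ν(n,k) is the unique positive zero of f_{n,k}(x) = x·log k + x − (x + 1/2)·log x − (x − 1)·log n. -/
/-!
Write `L = log n`. Expanding the logarithms, `f_{n,k}(x) = x (log k + 1 - log x - L) - (log x)/2 + L`.
If `k ≤ a e^{-1-2/a} n L` and `x ≥ a L ≥ 1`, the bracket is at most `-2/a`, so `f_{n,k}(x) ≤ -2L + L < 0`.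
Since `k(n)/(n log n) → 0`, for every `a > 0` this applies for large `n`, forcing `ν(n, k(n)) < a log n`.
-/

open Real Filter

lemma f_eq (n k : ℕ) (x : ℝ) :
    f n k x = x * (log k + 1 - log x - log n) - log x / 2 + log n := by
  unfold f
  ring

lemma f_neg_of_mul_log_le {n k : ℕ} {a x : ℝ} (hk : 1 ≤ k) (ha : 0 < a)
    (haL : 1 ≤ a * log n) (hkn : (k : ℝ) / (n * log n) ≤ a * exp (-1 - 2 / a))
    (hx : a * log n ≤ x) : f n k x < 0 := by
  have hL : 0 < log n := pos_of_mul_pos_right (by linarith) ha.le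
  have hn : (0 : ℝ) < n := Nat.cast_pos.2 (Nat.pos_of_ne_zero (by rintro rfl; simp at hL))
  have hk0 : (0 : ℝ) < k := by exact_mod_cast hk
  have hlogk : log k ≤ log a - 1 - 2 / a + log n + log (log n) := by
    rw [div_le_iff₀ (by positivity)] at hkn
    calc log k ≤ log (a * exp (-1 - 2 / a) * (n * log n)) := log_le_log hk0 hkn
      _ = _ := by
        rw [log_mul (by positivity) (by positivity), log_mul ha.ne' (exp_pos _).ne',
          log_exp, log_mul hn.ne' hL.ne']
        ring
  have hlogx : log a + log (log n) ≤ log x := by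
    rw [← log_mul ha.ne' hL.ne']
    exact log_le_log (by positivity) hx
  have hlogx0 : 0 ≤ log x := log_nonneg (haL.trans hx)
  have hx0 : 0 < x := by linarith
  calc f n k x = x * (log k + 1 - log x - log n) - log x / 2 + log n := f_eq n k x
    _ ≤ x * (-(2 / a)) - log x / 2 + log n := by gcongr; linarith
    _ ≤ -(2 * log n) + log n := by
      have : 2 * (a * log n) ≤ 2 * x := by linarith
      have : x * (-(2 / a)) ≤ -(2 * log n) := by
        rw [mul_neg, neg_le_neg_iff, mul_div_assoc', le_div_iff₀ ha]
        linarith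
      linarith
    _ < 0 := by linarith

/-- If `k(n) = o(n·log n)`, then `ν(n, k(n)) = o(log n)`, where `ν(n,k)` is the
unique positive zero of `f_{n,k}`. -/
theorem nu_small_o_log (k : ℕ → ℕ) (hk : ∀ n, 1 ≤ k n)
    (hbound : Filter.Tendsto
      (fun n : ℕ => (k n : ℝ) / ((n : ℝ) * Real.log n)) Filter.atTop (nhds 0))
    (ν : ℕ → ℝ) (hν : ∀ n, 1 ≤ n → 0 < ν n ∧ f n (k n) (ν n) = 0) :
    Filter.Tendsto (fun n : ℕ => ν n / Real.log n) Filter.atTop (nhds 0) := by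
  have hlog : Tendsto (fun n : ℕ => log n) atTop atTop :=
    tendsto_log_atTop.comp tendsto_natCast_atTop_atTop
  refine tendsto_order.2 ⟨fun b hb => ?_, fun a ha => ?_⟩
  · filter_upwards [hlog.eventually_gt_atTop 0, eventually_ge_atTop 1] with n hL hn
    exact hb.trans (div_pos (hν n hn).1 hL)
  · filter_upwards [hbound.eventually (gt_mem_nhds (by positivity : 0 < a * exp (-1 - 2 / a))),
      (hlog.const_mul_atTop ha).eventually_ge_atTop 1, eventually_ge_atTop 1] with n hkn haL hn
    have hL : 0 < log n := pos_of_mul_pos_right (by linarith) ha.le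
    have hνlt : ν n < a * log n := by
      by_contra! hge
      exact (f_neg_of_mul_log_le (hk n) ha haL hkn.le hge).ne (hν n hn).2
    rwa [div_lt_iff₀ hL]
end

section
/- Fix n ≥ t ≥ 1. The number of forests on vertex set {1,…,n} with exactly t trees such that vertices 1,…,t lie in pairwise different trees equals t·n^{n−t−1}. -/
/-!
A forest on `V` in which every tree contains exactly one vertex of a root set `R` is the same
thing as a parent map `p : V → V` fixing `R` whose iterates eventually land in `R`, the edges
being `v — p v`. Deleting a root `r` makes its children new roots of a parent map on `V \ {r}`.
Writing `f(n, t)` for the number of parent maps on `n` vertices with `t` given roots and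
`m = n - t`, this gives `f(n, t) = ∑ⱼ (m choose j) f(n - 1, t - 1 + j)`, and the identity
`∑ⱼ (m choose j) (s + j) z^(m - j) = s (z + 1)^m + m (z + 1)^(m - 1)` turns it, by induction
on `n`, into `n f(n, t) = t n^(n - t)`.
-/

/-- Forests on vertex set `{1, …, n}` consisting of exactly `t` trees such that
the roots `1, …, t` lie in pairwise different trees. -/
def ForestSet (n t : ℕ) : Set (SimpleGraph (Fin n)) :=
  {G | G.IsAcyclic ∧ Nat.card G.ConnectedComponent = t ∧
    ∀ v w : Fin n, v.val < t → w.val < t → v ≠ w → ¬ G.Reachable v w}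

open Function SimpleGraph Finset

def IsParentMap {V : Type*} (R : Finset V) (p : V → V) : Prop :=
  (∀ v ∈ R, p v = v) ∧ ∀ v, ∃ k, p^[k] v ∈ R

namespace IsParentMap

variable {V : Type*} {R : Finset V} {p : V → V}

theorem iterate_eq_of_le (hp : IsParentMap R p) {v : V} {k j : ℕ} (hk : p^[k] v ∈ R)
    (hkj : k ≤ j) : p^[j] v = p^[k] v := by
  obtain ⟨i, rfl⟩ := Nat.exists_eq_add_of_le hkj
  rw [add_comm, iterate_add_apply, iterate_fixed (hp.1 _ hk)]

theorem mem_of_isPeriodicPt (hp : IsParentMap R p) {v : V} {n : ℕ} (hn : 0 < n)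
    (hv : IsPeriodicPt p n v) : v ∈ R := by
  obtain ⟨k, hk⟩ := hp.2 v
  have hvk : p^[n * k] v = v := hv.mul_const k
  rw [← hvk, hp.iterate_eq_of_le hk (Nat.le_mul_of_pos_left k hn)]
  exact hk

theorem apply_eq_self_iff (hp : IsParentMap R p) {v : V} : p v = v ↔ v ∈ R :=
  ⟨fun h => hp.mem_of_isPeriodicPt one_pos (by simpa [IsPeriodicPt, IsFixedPt] using h),
    hp.1 v⟩

noncomputable def root (hp : IsParentMap R p) (v : V) : V := p^[(hp.2 v).choose] v

theorem root_mem (hp : IsParentMap R p) (v : V) : hp.root v ∈ R := (hp.2 v).choose_spec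

theorem root_eq (hp : IsParentMap R p) {v : V} {k : ℕ} (hk : p^[k] v ∈ R) :
    hp.root v = p^[k] v := by
  rcases le_total k (hp.2 v).choose with h | h
  · exact hp.iterate_eq_of_le hk h
  · exact (hp.iterate_eq_of_le (hp.root_mem v) h).symm

theorem root_of_mem (hp : IsParentMap R p) {v : V} (hv : v ∈ R) : hp.root v = v :=
  hp.root_eq (k := 0) hv

theorem root_apply (hp : IsParentMap R p) (v : V) : hp.root (p v) = hp.root v := by
  obtain ⟨k, hk⟩ := hp.2 (p v)
  rw [hp.root_eq hk, hp.root_eq (k := k + 1) (by rwa [iterate_succ_apply]), iterate_succ_apply]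

end IsParentMap

def parentGraph {V : Type*} (p : V → V) : SimpleGraph V := SimpleGraph.fromRel fun v w => p v = w

section parentGraph

variable {V : Type*} {R : Finset V} {p : V → V}

theorem parentGraph_adj {v w : V} : (parentGraph p).Adj v w ↔ v ≠ w ∧ (p v = w ∨ p w = v) :=
  fromRel_adj _ v w

theorem parentGraph_reachable_iterate (v : V) (k : ℕ) :
    (parentGraph p).Reachable v (p^[k] v) := by
  induction k with
  | zero => rfl
  | succ k ih =>
    rw [iterate_succ_apply']
    refine ih.trans ?_
    by_cases h : p^[k] v = p (p^[k] v)
    · rw [← h]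
    · exact (parentGraph_adj.mpr ⟨h, Or.inl rfl⟩).reachable

theorem IsParentMap.root_eq_of_reachable (hp : IsParentMap R p) {v w : V}
    (h : (parentGraph p).Reachable v w) : hp.root v = hp.root w := by
  obtain ⟨W⟩ := h
  induction W with
  | nil => rfl
  | cons hadj _ ih =>
    rw [← ih]
    rcases (parentGraph_adj.mp hadj).2 with rfl | rfl
    exacts [(hp.root_apply _).symm, hp.root_apply _]

theorem IsParentMap.bijective_connectedComponentMk (hp : IsParentMap R p) :
    Bijective fun r : R => (parentGraph p).connectedComponentMk r := by
  refine ⟨fun r s hrs => Subtype.ext ?_, fun c => c.ind fun v => ?_⟩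
  · have := hp.root_eq_of_reachable (ConnectedComponent.exact hrs)
    rwa [hp.root_of_mem r.2, hp.root_of_mem s.2] at this
  · obtain ⟨k, hk⟩ := hp.2 v
    exact ⟨⟨_, hk⟩, ConnectedComponent.sound (parentGraph_reachable_iterate v k).symm⟩

/-- The descendants of `v` can only be left through the edge from `v` to its parent. -/
theorem IsParentMap.isBridge (hp : IsParentMap R p) {v : V} (hv : p v ≠ v) :
    (parentGraph p).IsBridge s(v, p v) := by
  set S : Set V := {x | ∃ k, p^[k] x = v}
  have hS : ∀ x y, x ∈ S → y ∉ S → (parentGraph p).Adj x y → x = v ∧ y = p v := by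
    rintro x y ⟨k, hk⟩ hy hxy
    rcases (parentGraph_adj.mp hxy).2 with rfl | rfl
    · cases k with
      | zero => exact ⟨hk, by rw [← hk]; rfl⟩
      | succ k => exact absurd ⟨k, by rwa [← iterate_succ_apply]⟩ hy
    · exact absurd ⟨k + 1, by rwa [iterate_succ_apply]⟩ hy
  have hpv : p v ∉ S := by
    rintro ⟨k, hk⟩
    refine hv (hp.1 v (hp.mem_of_isPeriodicPt k.succ_pos ?_))
    rwa [IsPeriodicPt, IsFixedPt, iterate_succ_apply]
  refine isBridge_iff_forall_walk_mem_edges.mpr fun W => ?_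
  obtain ⟨d, hd, hdS, hdS'⟩ := W.exists_boundary_dart S ⟨0, rfl⟩ hpv
  obtain ⟨h1, h2⟩ := hS _ _ hdS hdS' d.adj
  have : d.edge = s(v, p v) := by rw [Dart.edge, Sym2.mk, h1, h2]
  rw [← this]
  exact List.mem_map_of_mem hd

theorem IsParentMap.isAcyclic (hp : IsParentMap R p) : (parentGraph p).IsAcyclic := by
  refine isAcyclic_iff_forall_adj_isBridge.mpr fun v w h => ?_
  obtain ⟨hne, rfl | rfl⟩ := parentGraph_adj.mp h
  · exact hp.isBridge hne.symm
  · rw [Sym2.eq_swap]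
    exact hp.isBridge hne

theorem parentGraph_injective {p' : V → V} (hp : IsParentMap R p) (hp' : IsParentMap R p')
    (h : parentGraph p = parentGraph p') : p = p' := by
  funext v
  obtain ⟨k, hk⟩ := hp.2 v
  induction k generalizing v with
  | zero => rw [hp.1 v hk, hp'.1 v hk]
  | succ k ih =>
    by_contra hne
    have hvR : v ∉ R := fun hv => hne (by rw [hp.1 v hv, hp'.1 v hv])
    have hadj : (parentGraph p').Adj v (p v) :=
      h ▸ parentGraph_adj.mpr ⟨fun e => hvR (hp.apply_eq_self_iff.mp e.symm), Or.inl rfl⟩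
    obtain ⟨-, h' | h'⟩ := parentGraph_adj.mp hadj
    · exact hne h'.symm
    · have hper : IsPeriodicPt p 2 v := by
        rw [IsPeriodicPt, IsFixedPt, iterate_succ_apply, iterate_one,
          ih (p v) (by rwa [← iterate_succ_apply]), h']
      exact hvR (hp.mem_of_isPeriodicPt two_pos hper)

end parentGraph

theorem SimpleGraph.IsAcyclic.snd_eq_or_snd_eq {V : Type*} {G : SimpleGraph V} (hG : G.IsAcyclic)
    {u v w : V} {p : G.Walk v u} {q : G.Walk w u} (hp : p.IsPath) (hq : q.IsPath)
    (h : G.Adj v w) : p.snd = w ∨ q.snd = v := by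
  by_cases hw : w ∈ p.support
  · exact Or.inl (hG.eq_snd_of_adj_start hp h hw).symm
  · have hv : v ∈ q.reverse.support :=
      hG.mem_support_of_ne_mem_support_of_adj_of_isPath hq.reverse hp.reverse h.symm (by simpa)
    exact Or.inr (hG.eq_snd_of_adj_start hq h.symm (by simpa using hv)).symm

section forestParent

variable {V : Type*} {G : SimpleGraph V} {R : Finset V}
  (hR : Bijective fun r : R => G.connectedComponentMk r)

noncomputable def forestRoot (v : V) : R := (Equiv.ofBijective _ hR).symm (G.connectedComponentMk v)

theorem reachable_forestRoot (v : V) : G.Reachable v (forestRoot hR v) :=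
  ConnectedComponent.exact (Equiv.ofBijective_apply_symm_apply _ hR _).symm

theorem forestRoot_eq_of_reachable {v w : V} (h : G.Reachable v w) :
    forestRoot hR v = forestRoot hR w := by
  rw [forestRoot, forestRoot, ConnectedComponent.sound h]

theorem forestRoot_of_mem {v : V} (hv : v ∈ R) : forestRoot hR v = ⟨v, hv⟩ :=
  (Equiv.ofBijective _ hR).symm_apply_apply ⟨v, hv⟩

noncomputable def forestPath (v : V) : G.Walk v (forestRoot hR v) :=
  (reachable_forestRoot hR v).exists_path_of_dist.choose

theorem isPath_forestPath (v : V) : (forestPath hR v).IsPath :=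
  (reachable_forestRoot hR v).exists_path_of_dist.choose_spec.1

theorem length_forestPath (v : V) : (forestPath hR v).length = G.dist v (forestRoot hR v) :=
  (reachable_forestRoot hR v).exists_path_of_dist.choose_spec.2

/-- For a root the path is nil, and `Walk.snd` of a nil walk is its endpoint. -/
noncomputable def forestParent (v : V) : V := (forestPath hR v).snd

theorem forestParent_of_mem {v : V} (hv : v ∈ R) : forestParent hR v = v := by
  have hlen : (forestPath hR v).length = 0 := by
    rw [length_forestPath, forestRoot_of_mem hR hv]
    exact dist_self
  rw [forestParent, Walk.snd, Walk.getVert_of_length_le _ (by omega), forestRoot_of_mem hR hv]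

theorem adj_forestParent {v : V} (hv : forestParent hR v ≠ v) : G.Adj v (forestParent hR v) := by
  refine Walk.adj_snd fun hnil => hv ?_
  rw [forestParent, Walk.snd, Walk.getVert_of_length_le _ (by simp [hnil.length_eq_zero])]
  exact hnil.eq.symm

theorem dist_forestParent_lt {v : V} (hv : v ∉ R) :
    G.dist (forestParent hR v) (forestRoot hR (forestParent hR v)) <
      G.dist v (forestRoot hR v) := by
  have hnil : ¬(forestPath hR v).Nil :=
    Walk.not_nil_of_ne fun h => hv (h ▸ (forestRoot hR v).2)
  rw [forestParent, ← forestRoot_eq_of_reachable hR (Walk.adj_snd hnil).reachable,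
    ← length_forestPath, ← Walk.length_tail_add_one hnil]
  exact Nat.lt_succ_of_le (dist_le _)

theorem isParentMap_forestParent : IsParentMap R (forestParent hR) := by
  refine ⟨fun v hv => forestParent_of_mem hR hv, fun v => ?_⟩
  induction hd : G.dist v (forestRoot hR v) using Nat.strong_induction_on generalizing v with
  | _ d ih =>
    by_cases hv : v ∈ R
    · exact ⟨0, hv⟩
    · obtain ⟨k, hk⟩ := ih _ (hd ▸ dist_forestParent_lt hR hv) _ rfl
      exact ⟨k + 1, by rwa [iterate_succ_apply]⟩

theorem parentGraph_forestParent (hG : G.IsAcyclic) : parentGraph (forestParent hR) = G := by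
  ext v w
  rw [parentGraph_adj]
  constructor
  · rintro ⟨hne, rfl | rfl⟩
    exacts [adj_forestParent hR hne.symm, (adj_forestParent hR hne).symm]
  · intro h
    have hroot : (forestRoot hR w : V) = forestRoot hR v :=
      congrArg Subtype.val (forestRoot_eq_of_reachable hR h.reachable).symm
    have hw := (Walk.isPath_copy _ rfl hroot).mpr (isPath_forestPath hR w)
    simpa [forestParent, Walk.getVert_copy, h.ne] using
      hG.snd_eq_or_snd_eq (isPath_forestPath hR v) hw h

end forestParent

theorem bijective_connectedComponentMk_iff {V : Type*} [Finite V] {G : SimpleGraph V}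
    {R : Finset V} :
    Bijective (fun r : R => G.connectedComponentMk r) ↔
      Nat.card G.ConnectedComponent = #R ∧
        ∀ v ∈ R, ∀ w ∈ R, v ≠ w → ¬G.Reachable v w := by
  rw [Nat.bijective_iff_injective_and_card, Nat.card_eq_finsetCard, and_comm, eq_comm]
  refine and_congr_right' ⟨fun h v hv w hw hvw hr => ?_, fun h r s hrs => ?_⟩
  · exact hvw (congrArg Subtype.val (@h ⟨v, hv⟩ ⟨w, hw⟩ (ConnectedComponent.sound hr)))
  · by_contra hne
    exact h r r.2 s s.2 (fun e => hne (Subtype.ext e)) (ConnectedComponent.exact hrs)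

theorem image_parentGraph {V : Type*} (R : Finset V) :
    parentGraph '' {p | IsParentMap R p} =
      {G | G.IsAcyclic ∧ Bijective fun r : R => G.connectedComponentMk r} := by
  ext G
  constructor
  · rintro ⟨p, hp, rfl⟩
    exact ⟨hp.isAcyclic, hp.bijective_connectedComponentMk⟩
  · rintro ⟨hG, hR⟩
    exact ⟨forestParent hR, isParentMap_forestParent hR, parentGraph_forestParent hR hG⟩

theorem ncard_setOf_isAcyclic_bijective {V : Type*} (R : Finset V) :
    {G : SimpleGraph V | G.IsAcyclic ∧ Bijective fun r : R => G.connectedComponentMk r}.ncard =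
      Nat.card {p // IsParentMap R p} := by
  rw [← image_parentGraph, Set.InjOn.ncard_image (s := {p | IsParentMap R p})
    fun p hp p' hp' h => parentGraph_injective hp hp' h]
  exact (Nat.card_coe_set_eq _).symm

theorem sum_choose_mul_pow (m z : ℕ) :
    ∑ j ∈ range (m + 1), m.choose j * z ^ (m - j) = (z + 1) ^ m := by
  rw [add_comm z 1, add_pow]
  exact sum_congr rfl fun j _ => by rw [one_pow, one_mul, mul_comm, Nat.cast_id]

theorem sum_mul_choose_mul_pow (m z : ℕ) :
    ∑ j ∈ range (m + 1), j * (m.choose j * z ^ (m - j)) = m * (z + 1) ^ (m - 1) := by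
  cases m with
  | zero => simp
  | succ m =>
    rw [sum_range_succ', zero_mul, add_zero, Nat.add_sub_cancel, ← sum_choose_mul_pow, mul_sum]
    refine sum_congr rfl fun j _ => ?_
    rw [Nat.add_sub_add_right, ← mul_assoc, ← mul_assoc, mul_comm (j + 1),
      ← Nat.add_one_mul_choose_eq]

theorem sum_choose_mul_add_mul_pow (s m z : ℕ) :
    ∑ j ∈ range (m + 1), m.choose j * ((s + j) * z ^ (m - j)) =
      s * (z + 1) ^ m + m * (z + 1) ^ (m - 1) := by
  rw [← sum_choose_mul_pow, ← sum_mul_choose_mul_pow, mul_sum, ← sum_add_distrib]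
  exact sum_congr rfl fun j _ => by ring

section deleteRoot

variable {V : Type*} [DecidableEq V] (r : V)

def rootChildren [Fintype V] (p : V → V) : Finset {x // x ≠ r} := {x | p x = r}

def deleteRoot (p : V → V) (x : {x // x ≠ r}) : {x // x ≠ r} :=
  if h : p x = r then x else ⟨p x, h⟩

def attachToRoot (J : Finset {x // x ≠ r}) (q : {x // x ≠ r} → {x // x ≠ r}) (v : V) : V :=
  if h : v = r then r else if ⟨v, h⟩ ∈ J then r else q ⟨v, h⟩

variable {r} {R : Finset V} {p : V → V} {J : Finset {x // x ≠ r}}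
  {q : {x // x ≠ r} → {x // x ≠ r}}

theorem attachToRoot_coe (x : {x // x ≠ r}) :
    attachToRoot r J q x = if x ∈ J then r else q x := by
  simp [attachToRoot, x.2]

theorem isParentMap_deleteRoot [Fintype V] (hp : IsParentMap R p) :
    IsParentMap (R.subtype (· ≠ r) ∪ rootChildren r p) (deleteRoot r p) := by
  refine ⟨fun x hx => ?_, fun x => ?_⟩
  · rcases mem_union.mp hx with hx | hx
    · have hpx : p x = x := hp.1 x (mem_subtype.mp hx)
      exact Subtype.ext (by simp [deleteRoot, hpx, x.2])
    · simp [deleteRoot, (mem_filter.mp hx).2]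
  · obtain ⟨k, hk⟩ := hp.2 x
    induction k generalizing x with
    | zero => exact ⟨0, mem_union_left _ (mem_subtype.mpr hk)⟩
    | succ k ih =>
      by_cases hx : p x = r
      · exact ⟨0, mem_union_right _ (by simp [rootChildren, hx])⟩
      · obtain ⟨j, hj⟩ := ih ⟨p x, hx⟩ (by rwa [← iterate_succ_apply])
        refine ⟨j + 1, ?_⟩
        rwa [iterate_succ_apply, deleteRoot, dif_neg hx]

theorem isParentMap_attachToRoot (hr : r ∈ R) (hJ : Disjoint (R.subtype (· ≠ r)) J)
    (hq : IsParentMap (R.subtype (· ≠ r) ∪ J) q) : IsParentMap R (attachToRoot r J q) := by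
  have hreach : ∀ x : {x // x ≠ r}, ∃ k, (attachToRoot r J q)^[k] x ∈ R := by
    intro x
    obtain ⟨k, hk⟩ := hq.2 x
    induction k generalizing x with
    | zero =>
      rcases mem_union.mp hk with hx | hx
      · exact ⟨0, mem_subtype.mp hx⟩
      · exact ⟨1, by simpa [attachToRoot_coe, show x ∈ J from hx] using hr⟩
    | succ k ih =>
      by_cases hx : x ∈ J
      · exact ⟨1, by simpa [attachToRoot_coe, hx] using hr⟩
      · obtain ⟨j, hj⟩ := ih (q x) (by rwa [← iterate_succ_apply])
        exact ⟨j + 1, by rwa [iterate_succ_apply, attachToRoot_coe, if_neg hx]⟩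
  refine ⟨fun v hv => ?_, fun v => ?_⟩
  · by_cases hvr : v = r
    · simp [attachToRoot, hvr]
    · have hv' : (⟨v, hvr⟩ : {x // x ≠ r}) ∈ R.subtype (· ≠ r) := mem_subtype.mpr hv
      rw [attachToRoot, dif_neg hvr, if_neg (disjoint_left.mp hJ hv'),
        hq.1 _ (mem_union_left _ hv')]
  · by_cases hvr : v = r
    · exact ⟨0, hvr ▸ hr⟩
    · exact hreach ⟨v, hvr⟩

theorem rootChildren_attachToRoot [Fintype V] : rootChildren r (attachToRoot r J q) = J := by
  ext x
  by_cases hx : x ∈ J <;> simp [rootChildren, attachToRoot_coe, hx, (q x).2]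

theorem deleteRoot_attachToRoot (hJ : ∀ x ∈ J, q x = x) :
    deleteRoot r (attachToRoot r J q) = q := by
  funext x
  by_cases hx : x ∈ J
  · simp [deleteRoot, attachToRoot_coe, hx, hJ x hx]
  · simp [deleteRoot, attachToRoot_coe, hx, (q x).2]

theorem attachToRoot_deleteRoot [Fintype V] (hr : p r = r) :
    attachToRoot r (rootChildren r p) (deleteRoot r p) = p := by
  funext v
  by_cases hvr : v = r
  · simp [attachToRoot, hvr, hr]
  · by_cases hv : p v = r <;> simp [attachToRoot, rootChildren, deleteRoot, hvr, hv]

end deleteRoot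

theorem card_isParentMap_univ {V : Type*} [Fintype V] :
    Nat.card {p // IsParentMap (univ : Finset V) p} = 1 := by
  refine Nat.card_eq_one_iff_exists.mpr
    ⟨⟨id, fun _ _ => rfl, fun v => ⟨0, mem_univ v⟩⟩, fun p => ?_⟩
  exact Subtype.ext (funext fun v => p.2.1 v (mem_univ v))

theorem isEmpty_isParentMap_empty {V : Type*} [Nonempty V] :
    IsEmpty {p // IsParentMap (∅ : Finset V) p} :=
  ⟨fun p => by simpa using (p.2.2 (Classical.arbitrary V)).choose_spec⟩

section count

variable {V : Type*} [Fintype V] [DecidableEq V] {R : Finset V} {r : V}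

theorem rootChildren_subset_compl {p : V → V} (hp : IsParentMap R p) :
    rootChildren r p ⊆ (R.subtype (· ≠ r))ᶜ := by
  intro x hx
  rw [mem_compl]
  intro hxR
  have hpx : p x = r := (mem_filter.mp hx).2
  exact x.2 (hpx ▸ hp.1 x (mem_subtype.mp hxR)).symm

/-- Deleting the root `r` turns its children into new roots. -/
def isParentMapEquivSigma (hr : r ∈ R) :
    {p // IsParentMap R p} ≃
      Σ J : (R.subtype (· ≠ r))ᶜ.powerset,
        {q // IsParentMap (R.subtype (· ≠ r) ∪ J) q} where
  toFun p := ⟨⟨rootChildren r p, mem_powerset.mpr (rootChildren_subset_compl p.2)⟩,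
    ⟨deleteRoot r p, isParentMap_deleteRoot p.2⟩⟩
  invFun Jq := ⟨attachToRoot r Jq.1 Jq.2,
    isParentMap_attachToRoot hr (subset_compl_iff_disjoint_left.mp (mem_powerset.mp Jq.1.2))
      Jq.2.2⟩
  left_inv p := Subtype.ext (attachToRoot_deleteRoot (p.2.1 r hr))
  right_inv Jq := Sigma.subtype_ext (Subtype.ext rootChildren_attachToRoot)
    (deleteRoot_attachToRoot fun x hx => Jq.2.2.1 x (mem_union_right _ hx))

theorem card_isParentMap_eq_sum (hr : r ∈ R) :
    Nat.card {p // IsParentMap R p} =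
      ∑ J ∈ (R.subtype (· ≠ r))ᶜ.powerset,
        Nat.card {q // IsParentMap (R.subtype (· ≠ r) ∪ J) q} := by
  rw [Nat.card_congr (isParentMapEquivSigma hr), Nat.card_sigma]
  exact sum_coe_sort _ fun J => Nat.card {q // IsParentMap (R.subtype (· ≠ r) ∪ J) q}

theorem mul_card_isParentMap_of_mem {s m : ℕ} (hr : r ∈ R) (hs : #R = s + 1)
    (hV : Fintype.card V = s + m + 2) (ih : ∀ R' : Finset {x // x ≠ r},
      Fintype.card {x // x ≠ r} * Nat.card {q // IsParentMap R' q} =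
        #R' * Fintype.card {x // x ≠ r} ^ (Fintype.card {x // x ≠ r} - #R')) :
    (s + m + 1) * Nat.card {p // IsParentMap R p} =
      s * (s + m + 2) ^ (m + 1) + (m + 1) * (s + m + 2) ^ m := by
  set R' := R.subtype (· ≠ r)
  have hV' : Fintype.card {x // x ≠ r} = s + m + 1 := by
    rw [Fintype.card_subtype_compl, Fintype.card_subtype_eq, hV]
    rfl
  have hR' : #R' = s := by
    rw [card_subtype, filter_ne', card_erase_of_mem hr, hs, Nat.add_sub_cancel]
  have hcompl : #R'ᶜ = m + 1 := by
    rw [card_compl, hV', hR']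
    omega
  calc (s + m + 1) * Nat.card {p // IsParentMap R p}
      = ∑ J ∈ R'ᶜ.powerset, (s + #J) * (s + m + 1) ^ (m + 1 - #J) := by
        rw [card_isParentMap_eq_sum hr, mul_sum, ← hV']
        refine sum_congr rfl fun J hJ => ?_
        rw [ih, card_union_of_disjoint (subset_compl_iff_disjoint_left.mp (mem_powerset.mp hJ)),
          hR', hV', add_assoc s m 1, Nat.add_sub_add_left]
    _ = ∑ j ∈ range (m + 2), (m + 1).choose j * ((s + j) * (s + m + 1) ^ (m + 1 - j)) := by
        rw [sum_powerset_apply_card (fun j => (s + j) * (s + m + 1) ^ (m + 1 - j)), hcompl]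
        rfl
    _ = _ := sum_choose_mul_add_mul_pow s (m + 1) (s + m + 1)

end count

/-- Stated multiplied by `Fintype.card V` so that it also covers `R = univ`, where the count
is `1`. -/
theorem card_mul_card_isParentMap {V : Type*} [Fintype V] [DecidableEq V] (R : Finset V) :
    Fintype.card V * Nat.card {p // IsParentMap R p} =
      #R * Fintype.card V ^ (Fintype.card V - #R) := by
  induction hn : Fintype.card V using Nat.strong_induction_on generalizing V with
  | _ n ih =>
    rcases R.eq_empty_or_nonempty with rfl | ⟨r, hr⟩
    · rcases isEmpty_or_nonempty V with hV | hV
      · simp [← hn]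
      · have := isEmpty_isParentMap_empty (V := V)
        simp
    by_cases hRu : R = univ
    · subst hRu
      rw [card_isParentMap_univ, card_univ, hn, Nat.sub_self, pow_zero]
    have hRn := (card_lt_iff_ne_univ R).mpr hRu
    obtain ⟨s, hs⟩ : ∃ s, #R = s + 1 := ⟨#R - 1, by have := card_pos.mpr ⟨r, hr⟩; omega⟩
    obtain ⟨m, rfl⟩ : ∃ m, n = s + m + 2 := ⟨n - s - 2, by omega⟩
    have hrec := mul_card_isParentMap_of_mem hr hs hn fun R' =>
      ih _ (hn ▸ Fintype.card_subtype_lt (p := (· ≠ r)) (not_not.mpr rfl)) R' rfl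
    rw [hs, show s + m + 2 - (s + 1) = m + 1 by omega]
    apply Nat.eq_of_mul_eq_mul_left (show 0 < s + m + 1 by omega)
    rw [mul_left_comm, hrec]
    ring

theorem card_forests_general (n t : ℕ) (h2 : t < n) :
    (ForestSet n t).ncard = t * n ^ (n - t - 1) := by
  set R : Finset (Fin n) := {v | v.val < t}
  have hR : #R = t := by simp [R, Fin.card_filter_val_lt, h2.le]
  have hforest : ForestSet n t =
      {G | G.IsAcyclic ∧ Bijective fun r : R => G.connectedComponentMk r} := by
    refine Set.ext fun G => and_congr_right fun _ => ?_
    rw [bijective_connectedComponentMk_iff, hR]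
    simp only [R, mem_filter, mem_univ, true_and]
    exact and_congr_right' ⟨fun h v hv w hw => h v w hv hw, fun h v w hv hw => h v hv w hw⟩
  have hcount := card_mul_card_isParentMap R
  rw [Fintype.card_fin, hR] at hcount
  rw [hforest, ncard_setOf_isAcyclic_bijective]
  apply Nat.eq_of_mul_eq_mul_left (show 0 < n by omega)
  have hpow : n ^ (n - t) = n * n ^ (n - t - 1) := by
    rw [← pow_succ']
    congr 1
    omega
  rw [hcount, hpow, mul_left_comm]

/-- The number of forests on `{1, …, n}` with exactly `t` trees whose roots
`1, …, t` lie in pairwise different trees equals `t·n^{n−t−1}`. -/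
theorem card_forests (n t : ℕ) (h1 : 1 ≤ t) (h2 : t < n) :
    (ForestSet n t).ncard = t * n ^ (n - t - 1) :=
  card_forests_general n t h2
end

section
/- Let m = m(n) = O(n). Consider the random multigraph M on vertex set {1,…,n} obtained from a uniformly random location vector (b₁,…,b_{2m}) ∈ {1,…,n}^{2m} by taking the m edges {b_{2i−1}, b_{2i}} for i = 1,…,m. Then lim inf over n of the probability that M is a simple graph is strictly positive. Moreover, conditioned on M being simple, M is uniformly distributed over all simple graphs on {1,…,n} with m edges. -/
/-!
An ordered pair `(a, b)` with `a ≠ b` determines the non-diagonal edge `s(a, b)`, and every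
such edge comes from exactly two ordered pairs. So a location vector is simple exactly when
its edge sequence is an injection into the `C(n,2)` possible edges, and every such injection
lifts to `2^m` location vectors: there are `2^m · (C(n,2))_m` simple location vectors, and
`2^m · m!` of them realise a given simple graph with `m` edges (one per ordering of its edges).

The probability of simplicity is then `∏_{i<m} 2(C(n,2) - i)/n²`, whose factors are at least
`1 - x` with `x = 1/n + 2m/n²`. Since `1 - x ≥ e^{-2x}` for `x ≤ 1/2`, the product is at least
`exp(-2m/n - 4m²/n²)`, which is bounded away from `0` when `m = O(n)`.
-/

open Function Finset Real

section LiftCount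

variable {ι α β : Type*} [Fintype ι]

theorem Nat.card_comp_eq_prod (p : α → β) (f : ι → β) :
    Nat.card {ω : ι → α // p ∘ ω = f} = ∏ i, Nat.card {a // p a = f i} := by
  rw [← Nat.card_pi]
  exact Nat.card_congr ((Equiv.subtypeEquivRight fun _ => funext_iff).trans
    (Equiv.subtypePiEquivPi (p := fun i a => p a = f i)))

theorem Set.ncard_comp_mem_of_card_fiber_eq [Finite α] [Finite β] (p : α → β) {S : Set β}
    {k : ℕ} (hk : ∀ b ∈ S, Nat.card {a // p a = b} = k) {T : Set (ι → β)}
    (hT : ∀ f ∈ T, ∀ i, f i ∈ S) :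
    {ω : ι → α | p ∘ ω ∈ T}.ncard = k ^ Fintype.card ι * T.ncard := by
  have := Fintype.ofFinite T
  rw [← Nat.card_coe_set_eq, ← Nat.card_congr (Equiv.sigmaSubtypeFiberEquivSubtype (p ∘ ·)
    (p := (· ∈ {ω | p ∘ ω ∈ T})) (q := (· ∈ T)) fun _ => Iff.rfl), Nat.card_sigma]
  have hfiber (f : T) : Nat.card {ω : ι → α // p ∘ ω = f} = k ^ Fintype.card ι := by
    rw [Nat.card_comp_eq_prod, prod_congr rfl fun i _ => hk _ (hT f f.2 i), prod_const,
      card_univ]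
  simp only [hfiber, sum_const, card_univ, smul_eq_mul, Set.ncard_eq_toFinset_card',
    Set.toFinset_card]
  ring

theorem Set.ncard_setOf_forall_mem_injective [Finite β] (S : Set β) :
    {f : ι → β | (∀ i, f i ∈ S) ∧ Injective f}.ncard =
      (Nat.card S).descFactorial (Fintype.card ι) := by
  have := Fintype.ofFinite S
  have hrange : {f : ι → β | (∀ i, f i ∈ S) ∧ Injective f} =
      Set.range fun e : ι ↪ S => Subtype.val ∘ e := by
    ext f
    refine ⟨fun ⟨hS, hf⟩ => ?_, ?_⟩
    · exact ⟨⟨Set.codRestrict f S hS, (Set.injective_codRestrict hS).2 hf⟩, rfl⟩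
    · rintro ⟨e, rfl⟩
      exact ⟨fun i => (e i).2, Subtype.val_injective.comp e.injective⟩
  rw [hrange, Set.ncard_range_of_injective, Nat.card_eq_fintype_card, Fintype.card_embedding_eq,
    Nat.card_eq_fintype_card]
  intro e e' h
  exact DFunLike.ext _ _ fun i => Subtype.val_injective (congrFun h i)

theorem Set.ncard_setOf_injective_range_eq [Finite β] (s : Set β)
    (hs : Nat.card s = Fintype.card ι) :
    {f : ι → β | Injective f ∧ Set.range f = s}.ncard = (Fintype.card ι).factorial := by
  classical
  have := Fintype.ofFinite s
  have hrange : {f : ι → β | Injective f ∧ Set.range f = s} =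
      Set.range fun e : ι ≃ s => Subtype.val ∘ e := by
    ext f
    refine ⟨fun ⟨hf, hfs⟩ => ?_, ?_⟩
    · have hS : ∀ i, f i ∈ s := fun i => hfs ▸ Set.mem_range_self i
      refine ⟨Equiv.ofBijective (Set.codRestrict f s hS)
        ⟨(Set.injective_codRestrict hS).2 hf, ?_⟩, rfl⟩
      rintro ⟨b, hb⟩
      obtain ⟨i, rfl⟩ := hfs ▸ hb
      exact ⟨i, rfl⟩
    · rintro ⟨e, rfl⟩
      refine ⟨Subtype.val_injective.comp e.injective, ?_⟩
      rw [Set.range_comp, e.range_eq_univ, Set.image_univ, Subtype.range_val]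
  rw [hrange, Set.ncard_range_of_injective, Nat.card_eq_fintype_card,
    Fintype.card_equiv (Fintype.equivOfCardEq (by rw [← hs, Nat.card_eq_fintype_card]))]
  intro e e' h
  exact Equiv.ext fun i => Subtype.val_injective (congrFun h i)

end LiftCount

theorem Sym2.card_mk_uncurry_eq_of_not_isDiag {α : Type*} {e : Sym2 α} (he : ¬ e.IsDiag) :
    Nat.card {p : α × α // Sym2.mk.uncurry p = e} = 2 := by
  induction e using Sym2.ind with
  | _ a b =>
    rw [Sym2.mk_isDiag_iff] at he
    have hfiber : {p : α × α | Sym2.mk.uncurry p = s(a, b)} = {(a, b), (b, a)} := by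
      ext ⟨x, y⟩
      simp [eq_comm, and_comm]
    rw [← Set.coe_ofPred, Nat.card_coe_set_eq, hfiber, Set.ncard_pair]
    simp [he]

theorem ncard_simple_locationVectors {V ι : Type*} [Fintype V] [Fintype ι] :
    {ω : ι → V × V | (∀ i, (ω i).1 ≠ (ω i).2) ∧
        Injective fun i => s((ω i).1, (ω i).2)}.ncard =
      2 ^ Fintype.card ι * ((Fintype.card V).choose 2).descFactorial (Fintype.card ι) := by
  classical
  have hS : Nat.card {e : Sym2 V | ¬ e.IsDiag} = (Fintype.card V).choose 2 := by
    rw [← Sym2.card_subtype_not_diag, ← Nat.card_eq_fintype_card]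
    rfl
  have := Set.ncard_comp_mem_of_card_fiber_eq (ι := ι) Sym2.mk.uncurry
    (S := {e : Sym2 V | ¬ e.IsDiag}) (fun _ he => Sym2.card_mk_uncurry_eq_of_not_isDiag he)
    (T := {f | (∀ i, f i ∈ {e | ¬ e.IsDiag}) ∧ Injective f}) fun _ hf => hf.1
  rwa [Set.ncard_setOf_forall_mem_injective, hS] at this

theorem ncard_locationVectors_eq_graph {V ι : Type*} [Fintype V] [Fintype ι]
    (H : SimpleGraph V) (hH : Nat.card H.edgeSet = Fintype.card ι) :
    {ω : ι → V × V | ((∀ i, (ω i).1 ≠ (ω i).2) ∧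
        Injective fun i => s((ω i).1, (ω i).2)) ∧
        Set.range (fun i => s((ω i).1, (ω i).2)) = H.edgeSet}.ncard =
      2 ^ Fintype.card ι * (Fintype.card ι).factorial := by
  have hset : {ω : ι → V × V | ((∀ i, (ω i).1 ≠ (ω i).2) ∧
      Injective fun i => s((ω i).1, (ω i).2)) ∧
      Set.range (fun i => s((ω i).1, (ω i).2)) = H.edgeSet} =
      {ω | Sym2.mk.uncurry ∘ ω ∈ {f | Injective f ∧ Set.range f = H.edgeSet}} := by
    ext ω
    refine ⟨fun ⟨⟨_, hinj⟩, hrange⟩ => ⟨hinj, hrange⟩,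
      fun ⟨hinj, hrange⟩ => ⟨⟨fun i h => ?_, hinj⟩, hrange⟩⟩
    exact H.not_isDiag_of_mem_edgeSet (hrange ▸ Set.mem_range_self i) (Sym2.mk_isDiag_iff.2 h)
  rw [hset, Set.ncard_comp_mem_of_card_fiber_eq Sym2.mk.uncurry (S := H.edgeSet)
    (T := {f | Injective f ∧ Set.range f = H.edgeSet})
    (fun _ he => Sym2.card_mk_uncurry_eq_of_not_isDiag (H.not_isDiag_of_mem_edgeSet he))
    fun f hf i => hf.2 ▸ Set.mem_range_self i, Set.ncard_setOf_injective_range_eq _ hH]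

theorem Real.exp_neg_two_mul_le_one_sub {x : ℝ} (h0 : 0 ≤ x) (h1 : x ≤ 1 / 2) :
    exp (-2 * x) ≤ 1 - x := by
  have : 1 ≤ (1 - x) * (1 + 2 * x) := by nlinarith
  calc exp (-2 * x) = (exp (2 * x))⁻¹ := by rw [← exp_neg]; ring_nf
    _ ≤ (1 + 2 * x)⁻¹ := inv_anti₀ (by positivity) (by linarith [add_one_le_exp (2 * x)])
    _ ≤ 1 - x := by rw [inv_le_iff_one_le_mul₀ (by positivity)]; linarith

theorem exp_le_two_pow_mul_descFactorial_div {n M : ℕ} (hn : 0 < n)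
    (h : 1 / n + 2 * M / n ^ 2 ≤ (1 / 2 : ℝ)) :
    exp (-(2 * M / n) - 4 * M ^ 2 / n ^ 2) ≤
      ((2 ^ M * (n.choose 2).descFactorial M : ℕ) : ℝ) / (n : ℝ) ^ (2 * M) := by
  set x : ℝ := 1 / n + 2 * M / n ^ 2 with hx_def
  have hn' : (0 : ℝ) < n := by exact_mod_cast hn
  have hx : 0 ≤ x := by positivity
  have hfactor : ∀ i ∈ range M, 1 - x ≤ 2 * ((n.choose 2 - i : ℕ) : ℝ) / n ^ 2 := by
    intro i hi
    have hiM : (i : ℝ) ≤ M := by exact_mod_cast (mem_range.1 hi).le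
    have hsub : (n.choose 2 : ℝ) ≤ ((n.choose 2 - i : ℕ) : ℝ) + i := by
      exact_mod_cast le_tsub_add
    rw [Nat.cast_choose_two] at hsub
    rw [le_div_iff₀ (by positivity)]
    have : (1 - x) * n ^ 2 = n * (n - 1) - 2 * M := by rw [hx_def]; field_simp; ring
    linarith
  have hprod : ((2 ^ M * (n.choose 2).descFactorial M : ℕ) : ℝ) / (n : ℝ) ^ (2 * M) =
      ∏ i ∈ range M, 2 * ((n.choose 2 - i : ℕ) : ℝ) / n ^ 2 := by
    rw [prod_div_distrib, prod_mul_distrib, prod_const, prod_const, card_range, pow_mul,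
      Nat.descFactorial_eq_prod_range]
    push_cast
    ring
  calc exp (-(2 * M / n) - 4 * M ^ 2 / n ^ 2) = exp (-2 * x) ^ M := by
        rw [← exp_nat_mul, hx_def]; congr 1; field_simp; ring
    _ ≤ (1 - x) ^ M := pow_le_pow_left₀ (exp_pos _).le (exp_neg_two_mul_le_one_sub hx h) M
    _ = ∏ _ ∈ range M, (1 - x) := by rw [prod_const, card_range]
    _ ≤ _ := prod_le_prod (fun _ _ => by linarith) hfactor
    _ = _ := hprod.symm

/-- The random multigraph on `[n]` with `m` edges given by a uniformly random
location vector (here: `m` independent uniform ordered pairs of vertices).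
With `m = O(n)`: the probability of being simple (no loops, no repeated edges)
has strictly positive lim inf; and conditioned on being simple the multigraph
is uniform over simple graphs with `m` edges, i.e. every simple graph `H` on
`[n]` with `m` edges arises from exactly `2^m·m!` location vectors (so that
`P(M = H) = 2^m·m!/n^{2m}`). -/
theorem random_multigraph_simple (m : ℕ → ℕ)
    (hm : ∃ C : ℝ, ∀ n : ℕ, (m n : ℝ) ≤ C * (n : ℝ)) :
    (∃ δ : ℝ, 0 < δ ∧ ∀ᶠ n : ℕ in Filter.atTop,
      δ ≤ ({ω : Fin (m n) → Fin n × Fin n |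
              (∀ i, (ω i).1 ≠ (ω i).2) ∧
              Function.Injective fun i => s((ω i).1, (ω i).2)}.ncard : ℝ) /
            (n : ℝ) ^ (2 * m n)) ∧
    ∀ n : ℕ, ∀ H : SimpleGraph (Fin n), Nat.card H.edgeSet = m n →
      {ω : Fin (m n) → Fin n × Fin n |
          ((∀ i, (ω i).1 ≠ (ω i).2) ∧
            Function.Injective fun i => s((ω i).1, (ω i).2)) ∧
          Set.range (fun i => s((ω i).1, (ω i).2)) = H.edgeSet}.ncard =
        2 ^ (m n) * (m n).factorial := by
  obtain ⟨C, hC⟩ := hm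
  refine ⟨⟨exp (-2 * C - 4 * C ^ 2), exp_pos _, ?_⟩, fun n H hH => ?_⟩
  · filter_upwards [Filter.eventually_gt_atTop 0,
      tendsto_natCast_atTop_atTop.eventually_ge_atTop (2 * (1 + 2 * C))] with n hn hnC
    have hn' : (0 : ℝ) < n := by exact_mod_cast hn
    have hdens : (m n : ℝ) / n ≤ C := (div_le_iff₀ hn').2 (hC n)
    have hdens0 : 0 ≤ (m n : ℝ) / n := by positivity
    rw [ncard_simple_locationVectors, Fintype.card_fin, Fintype.card_fin]
    refine (exp_le_exp.2 ?_).trans (exp_le_two_pow_mul_descFactorial_div hn ?_)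
    · rw [mul_div_assoc, mul_div_assoc, ← div_pow]
      nlinarith
    · calc (1 : ℝ) / n + 2 * m n / n ^ 2 = (1 + 2 * (m n / n)) / n := by field_simp
        _ ≤ (1 + 2 * C) / n := by gcongr
        _ ≤ 1 / 2 := by rw [div_le_iff₀ hn']; linarith
  · simpa using ncard_locationVectors_eq_graph H (hH.trans (Fintype.card_fin _).symm)
end
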